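/- Let V be a simple bounded S-module. Then z·V = 0. -/

import Mathlib

noncomputable section

/-- A module over the Fermion–Virasoro algebra `S = S(0)`:  a `ℤ/2`-graded complex
vector space with even operators `L m` (`m ∈ ℤ`), odd operators `ψ n` (`n ∈ ℤ`) and
even central operators `c`, `z`, subject to the defining relations of `S`. -/
structure SMod : Type 1 where
  carrier : Type
  [isAddCommGroup : AddCommGroup carrier]
  [isModule : Module ℂ carrier]
  L : ℤ → carrier →ₗ[ℂ] carrier
  ψ : ℤ → carrier →ₗ[ℂ] carrier
  c : carrier →ₗ[ℂ] carrier
  z : carrier →ₗ[ℂ] carrier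
  even : Submodule ℂ carrier
  odd : Submodule ℂ carrier
  isCompl_even_odd : IsCompl even odd
  L_maps_even : ∀ (m : ℤ), ∀ v ∈ even, L m v ∈ even
  L_maps_odd : ∀ (m : ℤ), ∀ v ∈ odd, L m v ∈ odd
  ψ_maps_even : ∀ (n : ℤ), ∀ v ∈ even, ψ n v ∈ odd
  ψ_maps_odd : ∀ (n : ℤ), ∀ v ∈ odd, ψ n v ∈ even
  c_maps_even : ∀ v ∈ even, c v ∈ even
  c_maps_odd : ∀ v ∈ odd, c v ∈ odd
  z_maps_even : ∀ v ∈ even, z v ∈ even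
  z_maps_odd : ∀ v ∈ odd, z v ∈ odd
  rel_LL : ∀ m n : ℤ, L m ∘ₗ L n - L n ∘ₗ L m =
    ((m : ℂ) - (n : ℂ)) • L (m + n) +
      (if m + n = 0 then (((m : ℂ) ^ 3 - (m : ℂ)) / 12) • c else 0)
  rel_Lψ : ∀ m n : ℤ, L m ∘ₗ ψ n - ψ n ∘ₗ L m = (-(n : ℂ) - (m : ℂ) / 2) • ψ (m + n)
  rel_ψψ : ∀ m n : ℤ, ψ m ∘ₗ ψ n + ψ n ∘ₗ ψ m = if m + n = 0 then z else 0
  c_comm_L : ∀ m : ℤ, c ∘ₗ L m = L m ∘ₗ c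
  c_comm_ψ : ∀ n : ℤ, c ∘ₗ ψ n = ψ n ∘ₗ c
  z_comm_L : ∀ m : ℤ, z ∘ₗ L m = L m ∘ₗ z
  z_comm_ψ : ∀ n : ℤ, z ∘ₗ ψ n = ψ n ∘ₗ z
  c_comm_z : c ∘ₗ z = z ∘ₗ c

attribute [instance] SMod.isAddCommGroup SMod.isModule

/-- A submodule invariant under the action of `S`. -/
def SMod.Invariant (ρ : SMod) (W : Submodule ℂ ρ.carrier) : Prop :=
  (∀ (m : ℤ), ∀ v ∈ W, ρ.L m v ∈ W) ∧ (∀ (n : ℤ), ∀ v ∈ W, ρ.ψ n v ∈ W) ∧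
    (∀ v ∈ W, ρ.c v ∈ W) ∧ (∀ v ∈ W, ρ.z v ∈ W)

/-- A `ℤ/2`-graded submodule. -/
def SMod.Graded (ρ : SMod) (W : Submodule ℂ ρ.carrier) : Prop :=
  W = (W ⊓ ρ.even) ⊔ (W ⊓ ρ.odd)

/-- A simple `S`-module: nonzero, and the only graded invariant submodules are `⊥`, `⊤`. -/
def SMod.IsSimple (ρ : SMod) : Prop :=
  (∃ v : ρ.carrier, v ≠ 0) ∧
    ∀ W : Submodule ℂ ρ.carrier, ρ.Invariant W → ρ.Graded W → W = ⊥ ∨ W = ⊤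

/-- A smooth `S`-module: each vector is annihilated by `L i` and `ψ i` for all
sufficiently large `i`. -/
def SMod.IsSmooth (ρ : SMod) : Prop :=
  ∀ v : ρ.carrier, ∃ n : ℕ, ∀ i : ℤ, (n : ℤ) < i → ρ.L i v = 0 ∧ ρ.ψ i v = 0

/-- An isomorphism of `S`-modules. -/
structure SIso (ρ σ : SMod) where
  e : ρ.carrier ≃ₗ[ℂ] σ.carrier
  map_even : ∀ v ∈ ρ.even, e v ∈ σ.even
  map_odd : ∀ v ∈ ρ.odd, e v ∈ σ.odd
  map_L : ∀ (m : ℤ) (v : ρ.carrier), e (ρ.L m v) = σ.L m (e v)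
  map_ψ : ∀ (n : ℤ) (v : ρ.carrier), e (ρ.ψ n v) = σ.ψ n (e v)
  map_c : ∀ v : ρ.carrier, e (ρ.c v) = σ.c (e v)
  map_z : ∀ v : ρ.carrier, e (ρ.z v) = σ.z (e v)
/-- A module over the Virasoro algebra `Vir = span{c, L_i : i ∈ ℤ}`. -/
structure VirMod : Type 1 where
  carrier : Type
  [isAddCommGroup : AddCommGroup carrier]
  [isModule : Module ℂ carrier]
  L : ℤ → carrier →ₗ[ℂ] carrier
  c : carrier →ₗ[ℂ] carrier
  rel_LL : ∀ m n : ℤ, L m ∘ₗ L n - L n ∘ₗ L m =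
    ((m : ℂ) - (n : ℂ)) • L (m + n) +
      (if m + n = 0 then (((m : ℂ) ^ 3 - (m : ℂ)) / 12) • c else 0)
  c_comm_L : ∀ m : ℤ, c ∘ₗ L m = L m ∘ₗ c

attribute [instance] VirMod.isAddCommGroup VirMod.isModule

/-- A submodule invariant under the action of `Vir`. -/
def VirMod.Invariant (σ : VirMod) (W : Submodule ℂ σ.carrier) : Prop :=
  (∀ (m : ℤ), ∀ v ∈ W, σ.L m v ∈ W) ∧ (∀ v ∈ W, σ.c v ∈ W)

/-- A simple `Vir`-module. -/
def VirMod.IsSimple (σ : VirMod) : Prop :=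
  (∃ v : σ.carrier, v ≠ 0) ∧
    ∀ W : Submodule ℂ σ.carrier, σ.Invariant W → W = ⊥ ∨ W = ⊤

/-- A smooth `Vir`-module. -/
def VirMod.IsSmooth (σ : VirMod) : Prop :=
  ∀ v : σ.carrier, ∃ n : ℕ, ∀ i : ℤ, (n : ℤ) < i → σ.L i v = 0
/-- The weight space `V_α = {v ∈ V : L_0 v = α v}` of an `S`-module. -/
def SMod.wtSpace (ρ : SMod) (α : ℂ) : Submodule ℂ ρ.carrier where
  carrier := {v | ρ.L 0 v = α • v}
  zero_mem' := by simp
  add_mem' := by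
    intro a b ha hb
    simp only [Set.mem_setOf_eq] at *
    rw [map_add, ha, hb, smul_add]
  smul_mem' := by
    intro t v hv
    simp only [Set.mem_setOf_eq] at *
    rw [map_smul, hv, smul_comm]

/-- A weight `S`-module: `L_0` acts diagonally, i.e. `V = ⊕_{α ∈ ℂ} V_α`. -/
def SMod.IsWeight (ρ : SMod) : Prop :=
  iSupIndep ρ.wtSpace ∧ (⨆ α : ℂ, ρ.wtSpace α) = ⊤

/-- A highest weight `S`-module: a weight module with `Supp(V) ⊆ α + ℤ_{≥0}`. -/
def SMod.IsHighestWeight (ρ : SMod) : Prop :=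
  ρ.IsWeight ∧ ∃ α : ℂ, ∀ β : ℂ, ρ.wtSpace β ≠ ⊥ → ∃ n : ℕ, β = α + n

/-- A lowest weight `S`-module: a weight module with `Supp(V) ⊆ α - ℤ_{≥0}`. -/
def SMod.IsLowestWeight (ρ : SMod) : Prop :=
  ρ.IsWeight ∧ ∃ α : ℂ, ∀ β : ℂ, ρ.wtSpace β ≠ ⊥ → ∃ n : ℕ, β = α - n

/-- A Harish-Chandra `S`-module: a weight module with finite-dimensional weight spaces. -/
def SMod.IsHarishChandra (ρ : SMod) : Prop :=
  ρ.IsWeight ∧ ∀ α : ℂ, FiniteDimensional ℂ (ρ.wtSpace α)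

/-- A bounded `S`-module: a weight module whose weight space dimensions are uniformly
bounded. -/
def SMod.IsBounded (ρ : SMod) : Prop :=
  ρ.IsWeight ∧ ∃ N : ℕ, ∀ α : ℂ,
    FiniteDimensional ℂ (ρ.wtSpace α) ∧ Module.finrank ℂ (ρ.wtSpace α) ≤ N

/-- The weight space `V_α` of a `Vir`-module. -/
def VirMod.wtSpace (σ : VirMod) (α : ℂ) : Submodule ℂ σ.carrier where
  carrier := {v | σ.L 0 v = α • v}
  zero_mem' := by simp
  add_mem' := by
    intro a b ha hb
    simp only [Set.mem_setOf_eq] at *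
    rw [map_add, ha, hb, smul_add]
  smul_mem' := by
    intro t v hv
    simp only [Set.mem_setOf_eq] at *
    rw [map_smul, hv, smul_comm]

/-- A weight `Vir`-module. -/
def VirMod.IsWeight (σ : VirMod) : Prop :=
  iSupIndep σ.wtSpace ∧ (⨆ α : ℂ, σ.wtSpace α) = ⊤

/-- A highest weight `Vir`-module. -/
def VirMod.IsHighestWeight (σ : VirMod) : Prop :=
  σ.IsWeight ∧ ∃ α : ℂ, ∀ β : ℂ, σ.wtSpace β ≠ ⊥ → ∃ n : ℕ, β = α + n

/-- A Harish-Chandra `Vir`-module. -/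
def VirMod.IsHarishChandra (σ : VirMod) : Prop :=
  σ.IsWeight ∧ ∀ α : ℂ, FiniteDimensional ℂ (σ.wtSpace α)

/-- The `Vir`-module underlying an `S`-module (restriction to the Virasoro subalgebra). -/
def SMod.toVir (ρ : SMod) : VirMod where
  carrier := ρ.carrier
  L := ρ.L
  c := ρ.c
  rel_LL := ρ.rel_LL
  c_comm_L := ρ.c_comm_L

namespace S15

variable {ρ : SMod}

lemma mem_wt {β : ℂ} {v : ρ.carrier} : v ∈ ρ.wtSpace β ↔ ρ.L 0 v = β • v := Iff.rfl

lemma psi_anti {a b : ℤ} (h : a + b ≠ 0) (x : ρ.carrier) :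
    ρ.ψ a (ρ.ψ b x) = - ρ.ψ b (ρ.ψ a x) := by
  have h2 := LinearMap.congr_fun (ρ.rel_ψψ a b) x
  rw [if_neg h] at h2
  simp only [LinearMap.add_apply, LinearMap.comp_apply, LinearMap.zero_apply] at h2
  exact eq_neg_of_add_eq_zero_left h2

lemma psi_pair (a : ℤ) (x : ρ.carrier) :
    ρ.ψ a (ρ.ψ (-a) x) + ρ.ψ (-a) (ρ.ψ a x) = ρ.z x := by
  have h2 := LinearMap.congr_fun (ρ.rel_ψψ a (-a)) x
  rw [if_pos (by ring)] at h2
  simpa only [LinearMap.add_apply, LinearMap.comp_apply] using h2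

lemma psi_sq {a : ℤ} (h : a ≠ 0) (x : ρ.carrier) : ρ.ψ a (ρ.ψ a x) = 0 := by
  have h1 := psi_anti (a := a) (b := a) (by omega) x
  have h2 : (2 : ℂ) • ρ.ψ a (ρ.ψ a x) = 0 := by
    rw [two_smul]
    nth_rewrite 2 [h1]
    exact add_neg_cancel _
  simpa using (smul_eq_zero.mp h2).resolve_left (by norm_num)

lemma wt_psi {β : ℂ} (j : ℤ) {v : ρ.carrier} (hv : v ∈ ρ.wtSpace β) :
    ρ.ψ j v ∈ ρ.wtSpace (β - (j : ℂ)) := by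
  have h := LinearMap.congr_fun (ρ.rel_Lψ 0 j) v
  simp only [LinearMap.sub_apply, LinearMap.comp_apply, LinearMap.smul_apply, zero_add,
    Int.cast_zero] at h
  rw [mem_wt] at hv ⊢
  have h2 : ρ.L 0 (ρ.ψ j v) = ρ.ψ j (ρ.L 0 v) + (-(j : ℂ) - 0 / 2) • ρ.ψ j v := by
    rw [← h]; ring_nf; abel
  rw [h2, hv, map_smul]
  rw [← add_smul]
  congr 1
  ring

lemma wt_z {β : ℂ} {v : ρ.carrier} (hv : v ∈ ρ.wtSpace β) : ρ.z v ∈ ρ.wtSpace β := by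
  have h := LinearMap.congr_fun (ρ.z_comm_L 0) v
  simp only [LinearMap.comp_apply] at h
  rw [mem_wt] at hv ⊢
  rw [← h, hv, map_smul]

/-- The basic "number operator" `ψ₋ₙψₙ`. -/
def pl (ρ : SMod) (n : ℕ) : ρ.carrier →ₗ[ℂ] ρ.carrier :=
  ρ.ψ (-(n : ℤ)) ∘ₗ ρ.ψ (n : ℤ)

lemma pl_apply (n : ℕ) (x : ρ.carrier) : pl ρ n x = ρ.ψ (-(n : ℤ)) (ρ.ψ (n : ℤ) x) := rfl

lemma pl_comm {a b : ℕ} (ha : 1 ≤ a) (hb : 1 ≤ b) (x : ρ.carrier) :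
    pl ρ a (pl ρ b x) = pl ρ b (pl ρ a x) := by
  rcases eq_or_ne a b with rfl | hab
  · rfl
  simp only [pl_apply]
  calc ρ.ψ (-(a:ℤ)) (ρ.ψ (a:ℤ) (ρ.ψ (-(b:ℤ)) (ρ.ψ (b:ℤ) x)))
      = - ρ.ψ (-(a:ℤ)) (ρ.ψ (-(b:ℤ)) (ρ.ψ (a:ℤ) (ρ.ψ (b:ℤ) x))) := by
        rw [psi_anti (by omega) (ρ.ψ (b:ℤ) x), map_neg]
    _ = ρ.ψ (-(a:ℤ)) (ρ.ψ (-(b:ℤ)) (ρ.ψ (b:ℤ) (ρ.ψ (a:ℤ) x))) := by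
        rw [psi_anti (a := (a:ℤ)) (b := (b:ℤ)) (by omega) x]
        simp only [map_neg, neg_neg]
    _ = - ρ.ψ (-(b:ℤ)) (ρ.ψ (-(a:ℤ)) (ρ.ψ (b:ℤ) (ρ.ψ (a:ℤ) x))) := by
        rw [psi_anti (a := -(a:ℤ)) (b := -(b:ℤ)) (by omega)]
    _ = ρ.ψ (-(b:ℤ)) (ρ.ψ (b:ℤ) (ρ.ψ (-(a:ℤ)) (ρ.ψ (a:ℤ) x))) := by
        rw [psi_anti (a := -(a:ℤ)) (b := (b:ℤ)) (by omega) (ρ.ψ (a:ℤ) x)]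
        simp only [map_neg, neg_neg]

lemma pl_self {μ : ℂ} (hz : ∀ v : ρ.carrier, ρ.z v = μ • v) {n : ℕ} (hn : 1 ≤ n)
    (x : ρ.carrier) : pl ρ n (pl ρ n x) = μ • pl ρ n x := by
  simp only [pl_apply]
  have hp := psi_pair (n : ℤ) (ρ.ψ (-(n:ℤ)) (ρ.ψ (n:ℤ) x))
  rw [hz] at hp
  have hsq : ρ.ψ (-(n:ℤ)) (ρ.ψ (-(n:ℤ)) (ρ.ψ (n:ℤ) x)) = 0 := psi_sq (by omega) _
  rw [hsq, map_zero, zero_add] at hp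
  exact hp

/-- Iterated application of "creation operators" `ψ₋d·n` to `u₀`. -/
def Wl (ρ : SMod) (d : ℤ) (u₀ : ρ.carrier) : List ℕ → ρ.carrier :=
  fun l => l.foldr (fun n x => ρ.ψ (-(d * (n : ℤ))) x) u₀

@[simp] lemma Wl_nil (d : ℤ) (u₀ : ρ.carrier) : Wl ρ d u₀ [] = u₀ := rfl

@[simp] lemma Wl_cons (d : ℤ) (u₀ : ρ.carrier) (n : ℕ) (l : List ℕ) :
    Wl ρ d u₀ (n :: l) = ρ.ψ (-(d * (n : ℤ))) (Wl ρ d u₀ l) := rfl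

/-- Iterated "annihilation operators" `ψ_{d·n}`. -/
def Phi (ρ : SMod) (d : ℤ) : List ℕ → (ρ.carrier →ₗ[ℂ] ρ.carrier) :=
  fun l => l.foldr (fun n f => ρ.ψ (d * (n : ℤ)) ∘ₗ f) LinearMap.id

@[simp] lemma Phi_nil (d : ℤ) (x : ρ.carrier) : Phi ρ d [] x = x := rfl

@[simp] lemma Phi_cons (d : ℤ) (n : ℕ) (l : List ℕ) (x : ρ.carrier) :
    Phi ρ d (n :: l) x = ρ.ψ (d * (n : ℤ)) (Phi ρ d l x) := rfl

lemma hne1 {d : ℤ} (hd : d ≠ 0) {a b : ℕ} (hab : a ≠ b) :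
    d * (a : ℤ) + -(d * (b : ℤ)) ≠ 0 := by
  intro h
  apply hab
  have h2 : d * ((a : ℤ) - (b : ℤ)) = 0 := by linarith [h]
  have h3 := (mul_eq_zero.mp h2).resolve_left hd
  omega

lemma lemA {d : ℤ} (hd : d ≠ 0) {u₀ : ρ.carrier} {a : ℕ}
    (ha : ρ.ψ (d * (a : ℤ)) u₀ = 0) :
    ∀ l : List ℕ, (∀ b ∈ l, b ≠ a) → ρ.ψ (d * (a : ℤ)) (Wl ρ d u₀ l) = 0 := by
  intro l
  induction l with
  | nil => intro _; simpa using ha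
  | cons b l ih =>
    intro hbl
    rw [Wl_cons, psi_anti (hne1 hd (fun h => (hbl b List.mem_cons_self) h.symm)),
      ih (fun x hx => hbl x (List.mem_cons_of_mem b hx)), map_zero, neg_zero]

lemma lemB {μ : ℂ} (hμ : μ ≠ 0) (hz : ∀ v : ρ.carrier, ρ.z v = μ • v)
    {d : ℤ} (hd : d ≠ 0) {u₀ : ρ.carrier} :
    ∀ l : List ℕ, l.Nodup → (∀ b ∈ l, ρ.ψ (d * (b : ℤ)) u₀ = 0) →
      ∀ a ∈ l, ∃ γ : ℂ, γ ≠ 0 ∧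
        ρ.ψ (d * (a : ℤ)) (Wl ρ d u₀ l) = γ • Wl ρ d u₀ (l.erase a) := by
  intro l
  induction l with
  | nil => simp
  | cons b l ih =>
    intro hnd hgd a ha
    rcases List.mem_cons.mp ha with rfl | hal
    · refine ⟨μ, hμ, ?_⟩
      rw [List.erase_cons_head, Wl_cons]
      have hpair := psi_pair (d * (a : ℤ)) (Wl ρ d u₀ l)
      rw [hz] at hpair
      have hzero : ρ.ψ (d * (a : ℤ)) (Wl ρ d u₀ l) = 0 :=
        lemA hd (hgd a List.mem_cons_self) l
          (fun x hx => fun h => (List.nodup_cons.mp hnd).1 (h ▸ hx))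
      rw [hzero, map_zero, add_zero] at hpair
      exact hpair
    · have hba : b ≠ a := fun h => (List.nodup_cons.mp hnd).1 (h ▸ hal)
      obtain ⟨γ, hγ, hγeq⟩ := ih (List.nodup_cons.mp hnd).2
        (fun x hx => hgd x (List.mem_cons_of_mem b hx)) a hal
      refine ⟨-γ, neg_ne_zero.mpr hγ, ?_⟩
      rw [Wl_cons, psi_anti (hne1 hd (Ne.symm hba)), hγeq, map_smul,
        List.erase_cons_tail (by simpa using hba)]
      rw [Wl_cons, neg_smul]

lemma diff_self_nil : ∀ l : List ℕ, l.diff l = [] := by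
  intro l
  induction l with
  | nil => rfl
  | cons a l ih => rw [List.diff_cons, List.erase_cons_head]; exact ih

lemma lemC1 {μ : ℂ} (hμ : μ ≠ 0) (hz : ∀ v : ρ.carrier, ρ.z v = μ • v)
    {d : ℤ} (hd : d ≠ 0) {u₀ : ρ.carrier} :
    ∀ t l : List ℕ, t.Nodup → l.Nodup → (∀ b ∈ l, ρ.ψ (d * (b : ℤ)) u₀ = 0) →
      (∀ x ∈ t, x ∈ l) → ∃ γ : ℂ, γ ≠ 0 ∧
        Phi ρ d t (Wl ρ d u₀ l) = γ • Wl ρ d u₀ (l.diff t) := by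
  intro t
  induction t with
  | nil => intro l _ _ _ _; exact ⟨1, one_ne_zero, by simp⟩
  | cons a t ih =>
    intro l hnd hlnd hlg hts
    obtain ⟨γ, hγ, hγeq⟩ := ih l (List.nodup_cons.mp hnd).2 hlnd hlg
      (fun x hx => hts x (List.mem_cons_of_mem a hx))
    have hal : a ∈ l.diff t :=
      List.mem_diff_of_mem (hts a List.mem_cons_self) (List.nodup_cons.mp hnd).1
    obtain ⟨γ', hγ', hγ'eq⟩ := lemB hμ hz hd (l.diff t) (hlnd.diff)
      (fun b hb => hlg b (List.diff_subset l t hb)) a hal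
    refine ⟨γ * γ', mul_ne_zero hγ hγ', ?_⟩
    rw [Phi_cons, hγeq, map_smul, hγ'eq, smul_smul, List.diff_erase, ← List.diff_cons]

lemma lemC2 {μ : ℂ} (hμ : μ ≠ 0) (hz : ∀ v : ρ.carrier, ρ.z v = μ • v)
    {d : ℤ} (hd : d ≠ 0) {u₀ : ρ.carrier} :
    ∀ t l : List ℕ, t.Nodup → l.Nodup → (∀ b ∈ l, ρ.ψ (d * (b : ℤ)) u₀ = 0) →
      (∀ x ∈ t, ρ.ψ (d * (x : ℤ)) u₀ = 0) → (∃ a ∈ t, a ∉ l) →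
      Phi ρ d t (Wl ρ d u₀ l) = 0 := by
  intro t
  induction t with
  | nil => rintro l _ _ _ _ ⟨a, ha, _⟩; cases ha
  | cons a t ih =>
    rintro l hnd hlnd hlg htg ⟨w, hw, hwl⟩
    by_cases hts : ∀ x ∈ t, x ∈ l
    · have haw : a ∉ l := by
        rcases List.mem_cons.mp hw with rfl | h
        · exact hwl
        · exact absurd (hts w h) hwl
      obtain ⟨γ, hγ, hγeq⟩ := lemC1 hμ hz hd t l (List.nodup_cons.mp hnd).2 hlnd hlg hts
      rw [Phi_cons, hγeq, map_smul,
        lemA hd (htg a List.mem_cons_self) (l.diff t)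
          (fun b hb => fun h => haw (h ▸ List.diff_subset l t hb)), smul_zero]
    · push_neg at hts
      obtain ⟨x, hx, hxl⟩ := hts
      rw [Phi_cons, ih l (List.nodup_cons.mp hnd).2 hlnd hlg
        (fun y hy => htg y (List.mem_cons_of_mem a hy)) ⟨x, hx, hxl⟩, map_zero]

lemma lemW {α : ℂ} {d : ℤ} {u₀ : ρ.carrier} (hu₀ : u₀ ∈ ρ.wtSpace α) :
    ∀ l : List ℕ, Wl ρ d u₀ l ∈ ρ.wtSpace (α + ((d * (l.sum : ℤ) : ℤ) : ℂ)) := by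
  intro l
  induction l with
  | nil => simpa using hu₀
  | cons n l ih =>
    have h := wt_psi (-(d * (n : ℤ))) ih
    have he : α + ((d * (l.sum : ℤ) : ℤ) : ℂ) - ((-(d * (n : ℤ)) : ℤ) : ℂ)
        = α + ((d * (((n :: l).sum : ℕ) : ℤ) : ℤ) : ℂ) := by
      rw [List.sum_cons]
      push_cast
      ring
    rw [he] at h
    exact h

lemma sum_toList (S : Finset ℕ) : S.toList.sum = S.sum id := by
  rw [Finset.sum, ← Multiset.sum_toList]
  congr 1
  rw [Multiset.map_id]
  rfl

lemma pow4_lt (n : ℕ) (hn : 17 ≤ n) : n ^ 4 < 2 ^ n := by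
  induction n, hn using Nat.le_induction with
  | base => norm_num
  | succ n hn ih =>
    have e1 : 17 * n ≤ n ^ 2 := by nlinarith
    have e2 : 17 * n ^ 2 ≤ n ^ 3 := by nlinarith
    have e3 : 17 * n ^ 3 ≤ n ^ 4 := by nlinarith
    have h1 : (n + 1) ^ 4 ≤ 2 * n ^ 4 := by nlinarith [e1, e2, e3]
    calc (n + 1) ^ 4 ≤ 2 * n ^ 4 := h1
      _ < 2 * 2 ^ n := by exact mul_lt_mul_of_pos_left ih (by norm_num)
      _ = 2 ^ (n + 1) := by rw [pow_succ]; ring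

lemma exists_m (N : ℕ) : ∃ m : ℕ, 0 < m ∧ (4 * m ^ 2 + 1) * N < 2 ^ m := by
  refine ⟨N + 17, by omega, ?_⟩
  set m := N + 17 with hm
  have hNm : N ≤ m := by omega
  have h17 : 17 ≤ m := by omega
  have e2 : 17 * m ^ 2 ≤ m ^ 3 := by nlinarith
  have e3 : 17 * m ^ 3 ≤ m ^ 4 := by nlinarith
  have h1 : (4 * m ^ 2 + 1) * N ≤ m ^ 4 := by nlinarith [e2, e3]
  have h2 : m ^ 4 < 2 ^ m := pow4_lt m h17
  exact lt_of_le_of_lt h1 h2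

/-- The main contradiction: a bounded weight module on which `z` acts by a nonzero
scalar cannot exist. -/
lemma partB (ρ : SMod) (μ : ℂ) (hμ : μ ≠ 0) (hz : ∀ v : ρ.carrier, ρ.z v = μ • v)
    (α : ℂ) (hα : ρ.wtSpace α ≠ ⊥) (N : ℕ)
    (hfd : ∀ β : ℂ, FiniteDimensional ℂ (ρ.wtSpace β))
    (hdim : ∀ β : ℂ, Module.finrank ℂ (ρ.wtSpace β) ≤ N) : False := by
  classical
  obtain ⟨m, hm0, hm⟩ := exists_m N
  set K := 2 * m with hK
  -- Step 1: a common eigenvector for the commuting "projections" pl n.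
  have ind : ∀ l : List ℕ, (∀ n ∈ l, 1 ≤ n) →
      ∃ U : Submodule ℂ ρ.carrier, U ≠ ⊥ ∧ U ≤ ρ.wtSpace α ∧
        (∀ j : ℕ, 1 ≤ j → ∀ u ∈ U, pl ρ j u ∈ U) ∧
        ∀ n ∈ l, (∀ u ∈ U, pl ρ n u = 0) ∨ (∀ u ∈ U, pl ρ n u = μ • u) := by
    intro l hl
    induction l with
    | nil =>
      refine ⟨ρ.wtSpace α, hα, le_rfl, ?_, by simp⟩
      intro j hj u hu
      have h1 := wt_psi (-(j : ℤ)) (wt_psi (j : ℤ) hu)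
      have he : α - ((j : ℤ) : ℂ) - ((-(j : ℤ) : ℤ) : ℂ) = α := by push_cast; ring
      rw [he] at h1
      exact h1
    | cons n l ih =>
      obtain ⟨U, hU0, hUle, hUinv, hUprop⟩ := ih (fun b hb => hl b (List.mem_cons_of_mem n hb))
      have hn1 : 1 ≤ n := hl n List.mem_cons_self
      by_cases hbot : U ⊓ LinearMap.ker (pl ρ n) = ⊥
      · refine ⟨U, hU0, hUle, hUinv, ?_⟩
        intro b hb
        rcases List.mem_cons.mp hb with rfl | hb'
        · right
          intro u hu
          have hmem : μ • u - pl ρ b u ∈ U ⊓ LinearMap.ker (pl ρ b) := by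
            refine Submodule.mem_inf.mpr
              ⟨sub_mem (Submodule.smul_mem U μ hu) (hUinv b hn1 u hu), ?_⟩
            rw [LinearMap.mem_ker, map_sub, map_smul, pl_self hz hn1]
            exact sub_self _
          rw [hbot] at hmem
          have h0 := (Submodule.mem_bot ℂ).mp hmem
          have := sub_eq_zero.mp h0
          exact this.symm
        · exact hUprop b hb'
      · refine ⟨U ⊓ LinearMap.ker (pl ρ n), hbot, le_trans inf_le_left hUle, ?_, ?_⟩
        · intro j hj u hu
          obtain ⟨hu1, hu2⟩ := Submodule.mem_inf.mp hu
          refine Submodule.mem_inf.mpr ⟨hUinv j hj u hu1, ?_⟩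
          rw [LinearMap.mem_ker, pl_comm hn1 hj]
          rw [LinearMap.mem_ker.mp hu2, map_zero]
        · intro b hb
          rcases List.mem_cons.mp hb with rfl | hb'
          · left
            intro u hu
            exact LinearMap.mem_ker.mp (Submodule.mem_inf.mp hu).2
          · rcases hUprop b hb' with h | h
            · left; intro u hu; exact h u (Submodule.mem_inf.mp hu).1
            · right; intro u hu; exact h u (Submodule.mem_inf.mp hu).1
  obtain ⟨U, hU0, hUle, -, hUprop⟩ := ind (Finset.Icc 1 K).toList
    (fun n hn => (Finset.mem_Icc.mp (Finset.mem_toList.mp hn)).1)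
  obtain ⟨u₀, hu₀U, hu₀⟩ := Submodule.ne_bot_iff U |>.mp hU0
  have hu₀wt : u₀ ∈ ρ.wtSpace α := hUle hu₀U
  -- Step 2: each index has a definite sign.
  have hsign : ∀ n ∈ Finset.Icc 1 K, ρ.ψ (n : ℤ) u₀ = 0 ∨ ρ.ψ (-(n : ℤ)) u₀ = 0 := by
    intro n hn
    have h1n : 1 ≤ n := (Finset.mem_Icc.mp hn).1
    have hnz : (n : ℤ) ≠ 0 := by omega
    rcases hUprop n (Finset.mem_toList.mpr hn) with h | h
    · left
      have h0 : pl ρ n u₀ = 0 := h u₀ hu₀U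
      rw [pl_apply] at h0
      have hpair := psi_pair (n : ℤ) u₀
      rw [hz, h0, add_zero] at hpair
      have : μ • ρ.ψ (n : ℤ) u₀ = 0 := by
        rw [← map_smul, ← hpair, psi_sq hnz]
      simpa using (smul_eq_zero.mp this).resolve_left hμ
    · right
      have h0 : pl ρ n u₀ = μ • u₀ := h u₀ hu₀U
      rw [pl_apply] at h0
      have : μ • ρ.ψ (-(n : ℤ)) u₀ = 0 := by
        rw [← map_smul, ← h0, psi_sq (by omega)]
      simpa using (smul_eq_zero.mp this).resolve_left hμ
  -- Step 3: pigeonhole on signs.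
  have hdC : ∃ d : ℤ, d ≠ 0 ∧ ∃ C : Finset ℕ, C ⊆ Finset.Icc 1 K ∧ m ≤ C.card ∧
      ∀ n ∈ C, ρ.ψ (d * (n : ℤ)) u₀ = 0 := by
    set C1 := (Finset.Icc 1 K).filter (fun n : ℕ => ρ.ψ ((n : ℕ) : ℤ) u₀ = 0) with hC1
    set C2 := (Finset.Icc 1 K).filter (fun n : ℕ => ρ.ψ (-((n : ℕ) : ℤ)) u₀ = 0) with hC2
    have hcover : Finset.Icc 1 K ⊆ C1 ∪ C2 := by
      intro n hn
      rcases hsign n hn with h | h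
      · exact Finset.mem_union_left _ (Finset.mem_filter.mpr ⟨hn, h⟩)
      · exact Finset.mem_union_right _ (Finset.mem_filter.mpr ⟨hn, h⟩)
    have hcards : K ≤ C1.card + C2.card := by
      calc K = (Finset.Icc 1 K).card := by rw [Nat.card_Icc]; omega
        _ ≤ (C1 ∪ C2).card := Finset.card_le_card hcover
        _ ≤ C1.card + C2.card := Finset.card_union_le C1 C2
    rcases (by omega : m ≤ C1.card ∨ m ≤ C2.card) with h | h
    · exact ⟨1, one_ne_zero, C1, Finset.filter_subset _ _, h,
        fun n hn => by simpa using (Finset.mem_filter.mp hn).2⟩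
    · exact ⟨-1, by norm_num, C2, Finset.filter_subset _ _, h,
        fun n hn => by simpa using (Finset.mem_filter.mp hn).2⟩
  obtain ⟨d, hd, C, hCsub, hCcard, hgood⟩ := hdC
  have hCmem : ∀ n ∈ C, 1 ≤ n ∧ n ≤ K := fun n hn => Finset.mem_Icc.mp (hCsub hn)
  -- Step 4: pigeonhole on subset sums.
  have hsum_bd : ∀ S ∈ C.powerset, S.sum id ∈ Finset.range (4 * m ^ 2 + 1) := by
    intro S hS
    rw [Finset.mem_range]
    have hS' := Finset.mem_powerset.mp hS
    have h1 : S.sum id ≤ S.card * K := by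
      have := Finset.sum_le_card_nsmul S id K (fun x hx => (hCmem x (hS' hx)).2)
      simpa [smul_eq_mul] using this
    have h2 : S.card ≤ K := by
      calc S.card ≤ C.card := Finset.card_le_card hS'
        _ ≤ (Finset.Icc 1 K).card := Finset.card_le_card hCsub
        _ = K := by rw [Nat.card_Icc]; omega
    have : S.sum id ≤ K * K := le_trans h1 (Nat.mul_le_mul_right K h2)
    have hKK : K * K = 4 * m ^ 2 := by rw [hK]; ring
    omega
  have hcardpow : (Finset.range (4 * m ^ 2 + 1)).card * N < C.powerset.card := by
    rw [Finset.card_range, Finset.card_powerset]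
    calc (4 * m ^ 2 + 1) * N < 2 ^ m := hm
      _ ≤ 2 ^ C.card := Nat.pow_le_pow_right (by norm_num) hCcard
  obtain ⟨M, hM, hMcard⟩ :=
    Finset.exists_lt_card_fiber_of_mul_lt_card_of_maps_to hsum_bd hcardpow
  set F := C.powerset.filter (fun S => S.sum id = M) with hF
  have hFmem : ∀ S ∈ F, S ⊆ C ∧ S.sum id = M := by
    intro S hS
    have := Finset.mem_filter.mp hS
    exact ⟨Finset.mem_powerset.mp this.1, this.2⟩
  -- Step 5: the monomial vectors lie in one weight space and are independent.
  set β := α + ((d * (M : ℤ) : ℤ) : ℂ) with hβ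
  have hmemβ : ∀ S ∈ F, Wl ρ d u₀ S.toList ∈ ρ.wtSpace β := by
    intro S hS
    have h := lemW (d := d) hu₀wt S.toList
    have hsum : S.toList.sum = M := by rw [sum_toList]; exact (hFmem S hS).2
    rw [hsum] at h
    exact h
  have hgood' : ∀ S ∈ F, ∀ x ∈ S.toList, ρ.ψ (d * (x : ℤ)) u₀ = 0 := by
    intro S hS x hx
    exact hgood x ((hFmem S hS).1 (Finset.mem_toList.mp hx))
  have hpos : ∀ S ∈ F, ∀ x ∈ S, 1 ≤ x := fun S hS x hx => (hCmem x ((hFmem S hS).1 hx)).1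
  let fv : {S : Finset ℕ // S ∈ F} → ↥(ρ.wtSpace β) :=
    fun S => ⟨Wl ρ d u₀ S.1.toList, hmemβ S.1 S.2⟩
  have hli : LinearIndependent ℂ fv := by
    rw [Fintype.linearIndependent_iff]
    intro g hg i₀
    have hg' : (∑ i : {S : Finset ℕ // S ∈ F}, g i • Wl ρ d u₀ i.1.toList)
        = (0 : ρ.carrier) := by
      have h2 := congrArg (fun x : ↥(ρ.wtSpace β) => (x : ρ.carrier)) hg
      simpa using h2
    have happ := congrArg (Phi ρ d i₀.1.toList) hg'
    rw [map_zero, map_sum] at happ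
    simp only [map_smul] at happ
    -- the diagonal term
    obtain ⟨γ, hγ, hγeq⟩ := lemC1 hμ hz hd i₀.1.toList i₀.1.toList
      (Finset.nodup_toList _) (Finset.nodup_toList _) (hgood' i₀.1 i₀.2) (fun x hx => hx)
    rw [diff_self_nil, Wl_nil] at hγeq
    have hsingle : (∑ i : {S : Finset ℕ // S ∈ F},
        g i • Phi ρ d i₀.1.toList (Wl ρ d u₀ i.1.toList)) = g i₀ • (γ • u₀) := by
      rw [Finset.sum_eq_single_of_mem i₀ (Finset.mem_univ i₀)]
      · rw [hγeq]
      · intro i _ hii₀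
        have hne : i.1 ≠ i₀.1 := fun h => hii₀ (Subtype.ext h)
        -- find a ∈ i₀.1 with a ∉ i.1
        have hnsub : ¬ (i₀.1 ⊆ i.1) := by
          intro hsub
          have hss : i₀.1 ⊂ i.1 := ⟨hsub, fun h => hne (Finset.Subset.antisymm h hsub)⟩
          obtain ⟨x, hxi, hxi₀⟩ := Finset.exists_of_ssubset hss
          have hlt : i₀.1.sum id < i.1.sum id := by
            refine Finset.sum_lt_sum_of_subset hsub hxi hxi₀ ?_ ?_
            · exact hpos i.1 i.2 x hxi
            · intro j _ _; exact Nat.zero_le _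
          rw [(hFmem i.1 i.2).2, (hFmem i₀.1 i₀.2).2] at hlt
          omega
        obtain ⟨a, hai₀, hai⟩ := Finset.not_subset.mp hnsub
        rw [lemC2 hμ hz hd i₀.1.toList i.1.toList (Finset.nodup_toList _)
          (Finset.nodup_toList _) (hgood' i.1 i.2) (hgood' i₀.1 i₀.2)
          ⟨a, Finset.mem_toList.mpr hai₀, fun h => hai (Finset.mem_toList.mp h)⟩, smul_zero]
    rw [hsingle] at happ
    rw [smul_smul] at happ
    rcases smul_eq_zero.mp happ with h | h
    · exact (mul_eq_zero.mp h).resolve_right hγ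
    · exact absurd h hu₀
  haveI := hfd β
  have hcard := hli.fintype_card_le_finrank
  rw [Fintype.card_coe] at hcard
  have : N < F.card := hMcard
  have : F.card ≤ N := le_trans hcard (hdim β)
  omega

end S15

/-- **Statement 15** (Lemma 5.2).  Let `V` be a simple bounded `S`-module.
Then `z · V = 0`. -/
theorem statement15 (ρ : SMod) (hsimple : ρ.IsSimple) (hbdd : ρ.IsBounded) :
    ρ.z = 0 := by
  classical
  obtain ⟨⟨hind, hsup⟩, N, hN⟩ := hbdd
  -- a nonzero weight space exists
  obtain ⟨α, hα⟩ : ∃ α : ℂ, ρ.wtSpace α ≠ ⊥ := by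
    by_contra h
    push_neg at h
    have htb : (⊤ : Submodule ℂ ρ.carrier) = ⊥ := by
      rw [← hsup]
      exact iSup_eq_bot.mpr h
    obtain ⟨v₁, hv₁⟩ := hsimple.1
    apply hv₁
    have : v₁ ∈ (⊥ : Submodule ℂ ρ.carrier) := htb ▸ Submodule.mem_top
    exact (Submodule.mem_bot ℂ).mp this
  haveI : FiniteDimensional ℂ ↥(ρ.wtSpace α) := (hN α).1
  haveI : Nontrivial ↥(ρ.wtSpace α) := Submodule.nontrivial_iff_ne_bot.mpr hα
  have hzres : ∀ v ∈ ρ.wtSpace α, ρ.z v ∈ ρ.wtSpace α := fun v hv => S15.wt_z hv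
  obtain ⟨μ, hμev⟩ := Module.End.exists_eigenvalue (ρ.z.restrict hzres)
  obtain ⟨v₀, hv₀⟩ := hμev.exists_hasEigenvector
  have hzv₀ : ρ.z ↑v₀ = μ • (↑v₀ : ρ.carrier) := by
    have h2 := congrArg (Subtype.val) hv₀.apply_eq_smul
    simpa [LinearMap.restrict_apply] using h2
  -- the kernel of z - μ is a graded invariant submodule
  set W := LinearMap.ker (ρ.z - μ • LinearMap.id) with hW
  have hmemW : ∀ v : ρ.carrier, v ∈ W ↔ ρ.z v - μ • v = 0 := by
    intro v
    rw [hW, LinearMap.mem_ker]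
    simp [LinearMap.sub_apply, LinearMap.smul_apply]
  have hWinv : ρ.Invariant W := by
    refine ⟨?_, ?_, ?_, ?_⟩
    · intro mm v hv
      rw [hmemW] at hv ⊢
      have hc := LinearMap.congr_fun (ρ.z_comm_L mm) v
      simp only [LinearMap.comp_apply] at hc
      rw [hc]
      have hzv : ρ.z v = μ • v := by rw [← sub_eq_zero]; exact hv
      rw [hzv, map_smul, sub_self]
    · intro nn v hv
      rw [hmemW] at hv ⊢
      have hc := LinearMap.congr_fun (ρ.z_comm_ψ nn) v
      simp only [LinearMap.comp_apply] at hc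
      rw [hc]
      have hzv : ρ.z v = μ • v := by rw [← sub_eq_zero]; exact hv
      rw [hzv, map_smul, sub_self]
    · intro v hv
      rw [hmemW] at hv ⊢
      have hc := LinearMap.congr_fun ρ.c_comm_z v
      simp only [LinearMap.comp_apply] at hc
      rw [← hc]
      have hzv : ρ.z v = μ • v := by rw [← sub_eq_zero]; exact hv
      rw [hzv, map_smul, sub_self]
    · intro v hv
      rw [hmemW] at hv ⊢
      have hzv : ρ.z v = μ • v := by rw [← sub_eq_zero]; exact hv
      rw [hzv, map_smul, hzv, sub_self]
  have hWgr : ρ.Graded W := by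
    apply le_antisymm
    · intro x hx
      have hxtop : x ∈ ρ.even ⊔ ρ.odd := by
        rw [ρ.isCompl_even_odd.sup_eq_top]
        trivial
      obtain ⟨e, he, o, ho, heo⟩ := Submodule.mem_sup.mp hxtop
      have h1 : ρ.z e - μ • e ∈ ρ.even :=
        sub_mem (ρ.z_maps_even e he) (Submodule.smul_mem _ μ he)
      have h2 : ρ.z o - μ • o ∈ ρ.odd :=
        sub_mem (ρ.z_maps_odd o ho) (Submodule.smul_mem _ μ ho)
      have hx0 : ρ.z x - μ • x = 0 := (hmemW x).mp hx
      have hsum : (ρ.z e - μ • e) + (ρ.z o - μ • o) = 0 := by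
        have : (ρ.z e - μ • e) + (ρ.z o - μ • o) = ρ.z x - μ • x := by
          rw [← heo, map_add, smul_add]
          abel
        rw [this]
        exact hx0
      have he0 : ρ.z e - μ • e = 0 := by
        have hneg : ρ.z e - μ • e = -(ρ.z o - μ • o) :=
          eq_neg_of_add_eq_zero_left hsum
        refine (Submodule.disjoint_def.mp ρ.isCompl_even_odd.disjoint) _ h1 ?_
        rw [hneg]
        exact neg_mem h2
      have ho0 : ρ.z o - μ • o = 0 := by
        have := hsum
        rw [he0, zero_add] at this
        exact this
      refine Submodule.mem_sup.mpr ⟨e, Submodule.mem_inf.mpr ⟨(hmemW e).mpr he0, he⟩, o,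
        Submodule.mem_inf.mpr ⟨(hmemW o).mpr ho0, ho⟩, heo⟩
    · exact sup_le inf_le_left inf_le_left
  have hWne : W ≠ ⊥ := by
    rw [Submodule.ne_bot_iff]
    refine ⟨↑v₀, (hmemW _).mpr (by rw [hzv₀, sub_self]), ?_⟩
    simpa using hv₀.2
  rcases hsimple.2 W hWinv hWgr with hbot | htop
  · exact absurd hbot hWne
  have hz : ∀ v : ρ.carrier, ρ.z v = μ • v := by
    intro v
    have hv : v ∈ W := htop ▸ Submodule.mem_top
    rw [← sub_eq_zero]
    exact (hmemW v).mp hv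
  by_cases hμ0 : μ = 0
  · apply LinearMap.ext
    intro v
    rw [hz v, hμ0, zero_smul]
    rfl
  · exact (S15.partB ρ μ hμ0 hz α hα N (fun β => (hN β).1) (fun β => (hN β).2)).elim

end
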